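/- arXiv:1709.01146 — 2 statements merged into one kernel-verified Lean document; each statement's English description precedes it below -/
import Mathlib

section
/- Let p i denote the i-th prime number. For every fixed n ≥ 1, the counting function of the survivors of the first n stages of the hard Sieve of Eratosthenes has natural density ∏_{i=1}^{n} (1 − 1/(p i)); that is, (1/t) · #{m : ℕ | 1 ≤ m ∧ m ≤ t ∧ ∀ i, 1 ≤ i → i ≤ n → ¬ p i ∣ m} tends to ∏_{i=1}^{n} (1 − 1/(p i)) as t → ∞. -/
/-!
A number survives the first `n` stages iff it is coprime to `P = p 1 ⋯ p n`. Coprimality to `P`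
is `P`-periodic, so every block of `P` consecutive integers contains exactly `φ P` survivors and
the density is `φ P / P`, which Euler's product formula turns into `∏ (1 - 1/p i)`.
-/

open Finset Filter Topology Function

theorem tendsto_div_of_abs_sub_mul_le {a : ℕ → ℝ} {L C : ℝ} (h : ∀ t, |a t - t * L| ≤ C) :
    Tendsto (fun t => a t / t) atTop (𝓝 L) := by
  rw [tendsto_iff_norm_sub_tendsto_zero]
  refine squeeze_zero' (Eventually.of_forall fun _ => norm_nonneg _) ?_
    (tendsto_const_div_atTop_nhds_zero_nat C)
  filter_upwards [eventually_gt_atTop 0] with t ht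
  have ht' : (0 : ℝ) < t := mod_cast ht
  calc ‖a t / t - L‖ = |a t - t * L| / t := by
        rw [Real.norm_eq_abs, ← abs_of_pos ht', ← abs_div, abs_of_pos ht', sub_div,
          mul_div_cancel_left₀ _ ht'.ne']
    _ ≤ C / t := by gcongr; exact h t

namespace Nat

theorem card_filter_Ico_add_mul_eq_of_periodic {Q : ℕ → Prop} [DecidablePred Q] {P : ℕ}
    (hQ : Periodic Q P) (k q : ℕ) : #{x ∈ Ico k (k + q * P) | Q x} = q * P.count Q := by
  induction q with
  | zero => simp
  | succ q ih =>
    have hsplit : Ico k (k + (q + 1) * P) =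
        Ico k (k + q * P) ∪ Ico (k + q * P) (k + q * P + P) := by
      rw [Ico_union_Ico_eq_Ico le_self_add (by nlinarith)]
      ring_nf
    rw [hsplit, filter_union, card_union_of_disjoint
      (disjoint_filter_filter (Ico_disjoint_Ico_consecutive _ _ _)), ih,
      filter_Ico_card_eq_of_periodic _ _ _ hQ]
    ring

theorem abs_card_filter_Icc_sub_le_of_periodic {Q : ℕ → Prop} [DecidablePred Q] {P : ℕ}
    (hP : 0 < P) (hQ : Periodic Q P) (t : ℕ) :
    |(#{m ∈ Icc 1 t | Q m} : ℝ) - t * (P.count Q / P)| ≤ P.count Q := by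
  set k := P.count Q
  set q := t / P
  have hqt : q * P ≤ t := div_mul_le_self t P
  have htq : t < (q + 1) * P := by rw [add_one_mul]; exact lt_div_mul_add hP
  have hlow : q * k ≤ #{m ∈ Icc 1 t | Q m} := by
    rw [← card_filter_Ico_add_mul_eq_of_periodic hQ 1]
    refine card_le_card (filter_subset_filter _ fun m hm => ?_)
    simp only [mem_Ico, mem_Icc] at *
    omega
  have hhigh : #{m ∈ Icc 1 t | Q m} ≤ (q + 1) * k := by
    rw [← card_filter_Ico_add_mul_eq_of_periodic hQ 1]
    refine card_le_card (filter_subset_filter _ fun m hm => ?_)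
    simp only [mem_Ico, mem_Icc] at *
    omega
  have hP' : (0 : ℝ) < P := mod_cast hP
  have hq_le : (q : ℝ) ≤ t / P := by rw [le_div_iff₀ hP']; exact_mod_cast hqt
  have hle_q : (t : ℝ) / P ≤ q + 1 := by rw [div_le_iff₀ hP']; exact_mod_cast htq.le
  have hk : (0 : ℝ) ≤ k := k.cast_nonneg
  rw [show (t : ℝ) * (k / P) = t / P * k by ring, abs_sub_le_iff]
  have hlow' : (q : ℝ) * k ≤ #{m ∈ Icc 1 t | Q m} := mod_cast hlow
  have hhigh' : (#{m ∈ Icc 1 t | Q m} : ℝ) ≤ (q + 1) * k := mod_cast hhigh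
  have h₁ := mul_le_mul_of_nonneg_right hq_le hk
  have h₂ := mul_le_mul_of_nonneg_right hle_q hk
  constructor <;> linarith

theorem tendsto_card_filter_Icc_div_of_periodic {Q : ℕ → Prop} [DecidablePred Q] {P : ℕ}
    (hP : 0 < P) (hQ : Periodic Q P) :
    Tendsto (fun t : ℕ => (#{m ∈ Icc 1 t | Q m} : ℝ) / t) atTop (𝓝 (P.count Q / P)) :=
  tendsto_div_of_abs_sub_mul_le (abs_card_filter_Icc_sub_le_of_periodic hP hQ)

theorem coprime_prod_primes_iff {s : Finset ℕ} (hs : ∀ p ∈ s, p.Prime) {m : ℕ} :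
    (∏ p ∈ s, p).Coprime m ↔ ∀ p ∈ s, ¬ p ∣ m := by
  rw [coprime_prod_left_iff]
  exact forall₂_congr fun p hp => (hs p hp).coprime_iff_not_dvd

theorem totient_prod_primes_div_eq_prod {s : Finset ℕ} (hs : ∀ p ∈ s, p.Prime) :
    (φ (∏ p ∈ s, p) : ℝ) / ∏ p ∈ s, p = ∏ p ∈ s, (1 - (p : ℝ)⁻¹) := by
  have hprod : (∏ p ∈ s, p : ℝ) ≠ 0 :=
    prod_ne_zero_iff.mpr fun p hp => mod_cast (hs p hp).ne_zero
  have h := congrArg (Rat.cast : ℚ → ℝ) (totient_eq_mul_prod_factors (∏ p ∈ s, p))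
  push_cast [primeFactors_prod hs] at h
  rw [h, cast_prod, mul_div_cancel_left₀ _ hprod]

theorem tendsto_card_filter_not_dvd_div {s : Finset ℕ} (hs : ∀ p ∈ s, p.Prime) :
    Tendsto (fun t : ℕ => (#{m ∈ Icc 1 t | ∀ p ∈ s, ¬ p ∣ m} : ℝ) / t) atTop
      (𝓝 (∏ p ∈ s, (1 - (p : ℝ)⁻¹))) := by
  simp_rw [← coprime_prod_primes_iff hs, ← totient_prod_primes_div_eq_prod hs,
    totient_eq_card_coprime, ← count_eq_card_filter_range]
  exact_mod_cast tendsto_card_filter_Icc_div_of_periodic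
    (prod_pos fun p hp => (hs p hp).pos) (periodic_coprime _)

theorem tendsto_card_filter_forall_not_dvd_div {ι : Type*} {I : Finset ι} {p : ι → ℕ}
    (hp : ∀ i ∈ I, (p i).Prime) (hinj : Set.InjOn p I) :
    Tendsto (fun t : ℕ => (#{m ∈ Icc 1 t | ∀ i ∈ I, ¬ p i ∣ m} : ℝ) / t) atTop
      (𝓝 (∏ i ∈ I, (1 - (p i : ℝ)⁻¹))) := by
  classical
  have hprimes : ∀ q ∈ I.image p, q.Prime := by simpa using hp
  simpa [prod_image hinj] using tendsto_card_filter_not_dvd_div hprimes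

end Nat

theorem eratosthenes_survivors_density_general (n : ℕ) :
    Filter.Tendsto
      (fun t : ℕ =>
        ((Set.ncard {m : ℕ | 1 ≤ m ∧ m ≤ t ∧
            ∀ i, 1 ≤ i → i ≤ n → ¬ Nat.nth Nat.Prime (i - 1) ∣ m} : ℝ) / t))
      Filter.atTop
      (nhds (∏ i ∈ Finset.Icc 1 n, (1 - 1 / (Nat.nth Nat.Prime (i - 1) : ℝ)))) := by
  have hinj : Set.InjOn (fun i => Nat.nth Nat.Prime (i - 1)) (Icc 1 n) := by
    intro i hi j hj hij
    have := Nat.nth_injective Nat.infinite_setOfPred_prime hij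
    simp only [coe_Icc, Set.mem_Icc] at hi hj
    omega
  have hsurvivors (t : ℕ) :
      {m : ℕ | 1 ≤ m ∧ m ≤ t ∧ ∀ i, 1 ≤ i → i ≤ n → ¬ Nat.nth Nat.Prime (i - 1) ∣ m} =
        ({m ∈ Icc 1 t | ∀ i ∈ Icc 1 n, ¬ Nat.nth Nat.Prime (i - 1) ∣ m} : Finset ℕ) := by
    ext m
    simp [and_assoc]
  simpa only [hsurvivors, Set.ncard_coe_finset, one_div] using
    Nat.tendsto_card_filter_forall_not_dvd_div (fun i _ => Nat.prime_nth_prime (i - 1)) hinj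

/-- The survivors of the first `n` stages of the hard Sieve of Eratosthenes have natural
density `∏_{i=1}^{n} (1 - 1/(p i))`, where `p i` is the `i`-th prime. -/
theorem eratosthenes_survivors_density (n : ℕ) (hn : 1 ≤ n) :
    Filter.Tendsto
      (fun t : ℕ =>
        ((Set.ncard {m : ℕ | 1 ≤ m ∧ m ≤ t ∧
            ∀ i, 1 ≤ i → i ≤ n → ¬ Nat.nth Nat.Prime (i - 1) ∣ m} : ℝ) / t))
      Filter.atTop
      (nhds (∏ i ∈ Finset.Icc 1 n, (1 - 1 / (Nat.nth Nat.Prime (i - 1) : ℝ)))) :=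
  eratosthenes_survivors_density_general n
end

section
/- For every n ≥ 1 and every k : ℕ, f n (k + ∏_{i=1}^{n} (x i − 1)) = f n k + ∏_{i=1}^{n} (x i). That is, the set of survivors of the first n stages of the model sieve is periodic with period ∏_{i=1}^{n} x i, each period containing exactly ∏_{i=1}^{n} (x i − 1) survivors. -/
/-- `gx x` is the 0-indexed strictly increasing enumeration of `{k : ℕ | k % x ≠ 1}`. -/
noncomputable def gx (x : ℕ) : ℕ → ℕ := Nat.nth (fun k => k % x ≠ 1)

/-- `modelF n` is the 0-indexed strictly increasing enumeration of the integers surviving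
`n` stages of the model sieve:  `modelF 0 k = k + 1` and
`modelF (n+1) k = modelF n (gx (modelX (n+1)) k)` where `modelX (n+1) = modelF n 1`. -/
noncomputable def modelF : ℕ → ℕ → ℕ
  | 0, k => k + 1
  | n + 1, k => modelF n (gx (modelF n 1) k)

/-- `modelX n` is the `n`-th model prime (`modelX 1 = 2, modelX 2 = 3, modelX 3 = 5, ...`). -/
noncomputable def modelX (n : ℕ) : ℕ := modelF (n - 1) 1

/-- `Lcount n t` is the number of survivors of the first `n` stages of the model sieve
that are `≤ t`. -/
noncomputable def Lcount (n t : ℕ) : ℕ := Set.ncard {k : ℕ | modelF n k ≤ t}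

/-!
Removing the residue class `1 mod x` is periodic: one period of length `x` keeps `x - 1` numbers,
so `gx x (k + (x - 1)) = gx x k + x`. Write `A, B` for the two products at stage `n` and
`x = modelX (n + 1)`. Since `modelF (n + 1) = modelF n ∘ gx x`, shifting the index by `A * (x - 1)`
shifts `gx x` by `A * x`, i.e. by `x` periods `A` of `modelF n`, which by induction shifts
`modelF n` by `x * B`.
-/

open Function Finset

namespace Nat

variable {p : ℕ → Prop} [DecidablePred p] {d : ℕ}

theorem count_add_of_periodic (hp : Periodic p d) (m : ℕ) :
    count p (m + d) = count p m + count p d := by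
  have hshift : (fun k => p (k + d)) = p := funext hp
  simp only [count_add', hshift]

theorem infinite_setOf_of_periodic (hp : Periodic p d) (h : count p d ≠ 0) :
    {n | p n}.Infinite := by
  obtain ⟨m, -, hm⟩ : ∃ m, m < d ∧ p m := by
    simpa [count_eq_card_filter_range, Finset.card_eq_zero, Finset.filter_eq_empty_iff] using h
  have hd : 0 < d := Nat.pos_of_ne_zero fun hd => h (by simp [hd])
  refine Set.infinite_of_forall_exists_gt fun a => ⟨m + (a + 1) * d, ?_, by nlinarith⟩
  simpa using ((hp.nat_mul (a + 1)) m).symm ▸ hm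

theorem nth_add_count_of_periodic (hp : Periodic p d) (h : count p d ≠ 0) (k : ℕ) :
    nth p (k + count p d) = nth p k + d := by
  have hinf := infinite_setOf_of_periodic hp h
  have hmem : p (nth p k + d) := (hp _).symm ▸ nth_mem_of_infinite hinf k
  rw [← nth_count hmem, count_add_of_periodic hp, count_nth_of_infinite hinf]

theorem map_add_mul_of_map_add {f : ℕ → ℕ} {a b : ℕ} (hf : ∀ k, f (k + a) = f k + b)
    (m k : ℕ) : f (k + m * a) = f k + m * b := by
  induction m with
  | zero => simp
  | succ m ih => rw [add_mul, one_mul, ← add_assoc, hf, ih, add_mul, one_mul, add_assoc]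

end Nat

open Nat

theorem count_mod_ne_one {x : ℕ} (hx : 2 ≤ x) : count (· % x ≠ 1) x = x - 1 := by
  have : (Finset.range x).filter (· % x ≠ 1) = (Finset.range x).erase 1 := by
    ext k
    simp only [Finset.mem_filter, Finset.mem_erase, Finset.mem_range]
    constructor <;> rintro ⟨h₁, h₂⟩ <;> simp_all [Nat.mod_eq_of_lt]
  rw [count_eq_card_filter_range, this, Finset.card_erase_of_mem (by simp; omega),
    Finset.card_range]

theorem periodic_mod_ne_one (x : ℕ) : Periodic (· % x ≠ 1) x :=
  (periodic_mod x).comp (· ≠ 1)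

theorem count_mod_ne_one_ne_zero {x : ℕ} (hx : 2 ≤ x) : count (· % x ≠ 1) x ≠ 0 := by
  rw [count_mod_ne_one hx]; omega

theorem gx_add_sub_one {x : ℕ} (hx : 2 ≤ x) (k : ℕ) : gx x (k + (x - 1)) = gx x k + x := by
  have := nth_add_count_of_periodic (periodic_mod_ne_one x) (count_mod_ne_one_ne_zero hx) k
  rwa [count_mod_ne_one hx] at this

theorem gx_strictMono {x : ℕ} (hx : 2 ≤ x) : StrictMono (gx x) :=
  nth_strictMono <|
    infinite_setOf_of_periodic (periodic_mod_ne_one x) (count_mod_ne_one_ne_zero hx)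

theorem gx_zero (x : ℕ) : gx x 0 = 0 :=
  nth_zero_of_zero (by simp)

theorem modelF_zero_right (n : ℕ) : modelF n 0 = 1 := by
  induction n with
  | zero => rfl
  | succ n ih => rw [modelF, gx_zero, ih]

theorem modelF_strictMono (n : ℕ) : StrictMono (modelF n) := by
  induction n with
  | zero => exact fun a b h => by simpa [modelF] using h
  | succ n ih =>
    have hx : 2 ≤ modelF n 1 := by
      have h := ih zero_lt_one
      rwa [modelF_zero_right] at h
    exact ih.comp (gx_strictMono hx)

theorem two_le_modelX_succ (n : ℕ) : 2 ≤ modelX (n + 1) := by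
  have h := modelF_strictMono n zero_lt_one
  rwa [modelF_zero_right] at h

theorem model_sieve_periodic_general (n : ℕ) (k : ℕ) :
    modelF n (k + ∏ i ∈ Finset.Icc 1 n, (modelX i - 1)) =
      modelF n k + ∏ i ∈ Finset.Icc 1 n, modelX i := by
  induction n generalizing k with
  | zero => rfl
  | succ n ih =>
    rw [prod_Icc_succ_top (by omega), prod_Icc_succ_top (by omega)]
    change modelF n (gx (modelX (n + 1)) (k + _)) = modelF n (gx (modelX (n + 1)) k) + _
    rw [map_add_mul_of_map_add (gx_add_sub_one (two_le_modelX_succ n)), mul_comm,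
      map_add_mul_of_map_add ih, mul_comm]

/-- Periodicity of the model sieve: the survivors of the first `n` stages form a periodic
sequence with period `∏_{i=1}^{n} x i`, each period containing exactly
`∏_{i=1}^{n} (x i - 1)` survivors. -/
theorem model_sieve_periodic (n : ℕ) (hn : 1 ≤ n) (k : ℕ) :
    modelF n (k + ∏ i ∈ Finset.Icc 1 n, (modelX i - 1)) =
      modelF n k + ∏ i ∈ Finset.Icc 1 n, modelX i :=
  model_sieve_periodic_general n k
end
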